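/- Let 𝔽 be an ordered field, let L_1, L_2, L_3 be three lines in general position in 𝔽^2 (pairwise non-parallel, not concurrent), and let L_4 and L_4' be two parallel lines such that the three points L_1 ∩ L_2, L_2 ∩ L_3, L_1 ∩ L_3 all lie strictly between L_4 and L_4' (so each of L_4, L_4' is a line at infinity with respect to {L_1, L_2, L_3}, with the intersection points on opposite sides). Then for each i ∈ {1, 2, 3}: the point L_i ∩ L_4 lies strictly between the other two of the three points L_1 ∩ L_4, L_2 ∩ L_4, L_3 ∩ L_4 on L_4 if and only if L_i ∩ L_4' lies strictly between the other two of the three points L_1 ∩ L_4', L_2 ∩ L_4', L_3 ∩ L_4' on L_4'. -/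

import Mathlib

/-!
Write `f_l x = a l ⬝ᵥ x - b l` and `D_l = a l ⬝ᵥ perp a4`, the slope of `L_l` against the common
direction of the two lines at infinity. On either of them, the point on `L_k` lies between those
on `L_i` and `L_j` iff `f_i * f_j * (D_i * D_j) < 0` there. Since `L_i ∩ L_k` lies strictly
between the two lines at infinity, `q k` and `q' k` are on opposite sides of `L_i`, and likewise
of `L_j`; so `f_i * f_j` has the same sign at `q k` and at `q' k`.
-/

open Finset

/-- The affine hyperplane in `F^m` with equation `∑ j, a j * x j = b`. -/
def hypSet {F : Type*} [Field F] {m : ℕ} (a : Fin m → F) (b : F) :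
    Set (Fin m → F) :=
  {x | ∑ j, a j * x j = b}

/-- A family of `n` affine hyperplanes (given by normal vectors `a i` and constants
`b i`) in `F^m` is a hyperplane arrangement in general position: every nonempty
subfamily of `r ≤ m` of the hyperplanes meets in a nonempty affine subspace of
dimension `m - r`, and any more than `m` of the hyperplanes have empty intersection. -/
def IsArrangement {F : Type*} [Field F] {m n : ℕ}
    (a : Fin n → Fin m → F) (b : Fin n → F) : Prop :=
  (∀ i, a i ≠ 0) ∧
  (∀ T : Finset (Fin n), T.Nonempty → T.card ≤ m →
    ∃ A : AffineSubspace F (Fin m → F),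
      (A : Set (Fin m → F)) = ⋂ i ∈ T, hypSet (a i) (b i) ∧
      (A : Set (Fin m → F)).Nonempty ∧
      Module.finrank F A.direction = m - T.card) ∧
  (∀ T : Finset (Fin n), m < T.card → ⋂ i ∈ T, hypSet (a i) (b i) = ∅)

lemma mem_hypSet {F : Type*} [Field F] {m : ℕ} {a x : Fin m → F} {c : F} :
    x ∈ hypSet a c ↔ a ⬝ᵥ x = c :=
  Iff.rfl

/-- The quarter turn of `v`: `x ↦ perp a ⬝ᵥ x` is an affine coordinate along every line
`a ⬝ᵥ x = c`. -/
def perp {R : Type*} [Neg R] (v : Fin 2 → R) : Fin 2 → R := ![v 1, -v 0]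

lemma mem_openSegment_iff_of_injOn {𝕜 E G : Type*} [Ring 𝕜] [PartialOrder 𝕜]
    [IsOrderedRing 𝕜] [AddCommGroup E] [Module 𝕜 E] [AddCommGroup G] [Module 𝕜 G]
    (f : E →ᵃ[𝕜] G) {s : Set E} (hs : Convex 𝕜 s) (hf : Set.InjOn f s) {x y z : E}
    (hx : x ∈ s) (hy : y ∈ s) (hz : z ∈ s) :
    f z ∈ openSegment 𝕜 (f x) (f y) ↔ z ∈ openSegment 𝕜 x y := by
  rw [← image_openSegment, hf.mem_image_iff (hs.openSegment_subset hx hy) hz]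

section CommRing

variable {R : Type*} [CommRing R]

lemma dotProduct_perp_self (v : Fin 2 → R) : v ⬝ᵥ perp v = 0 := by
  simp only [dotProduct, perp, Fin.sum_univ_two, Matrix.cons_val_zero, Matrix.cons_val_one]
  ring

lemma dotProduct_perp_comm (u v : Fin 2 → R) : u ⬝ᵥ perp v = -(v ⬝ᵥ perp u) := by
  simp only [dotProduct, perp, Fin.sum_univ_two, Matrix.cons_val_zero, Matrix.cons_val_one]
  ring

lemma perp_dotProduct_perp (v : Fin 2 → R) : perp v ⬝ᵥ perp v = v ⬝ᵥ v := by
  simp only [dotProduct, perp, Fin.sum_univ_two, Matrix.cons_val_zero, Matrix.cons_val_one]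
  ring

end CommRing

section Field

variable {F : Type*} [Field F] [LinearOrder F] [IsStrictOrderedRing F]

lemma mem_openSegment_iff_sub_mul_sub_neg {x y z : F} (hxy : x ≠ y) :
    z ∈ openSegment F x y ↔ (x - z) * (y - z) < 0 := by
  rw [openSegment_eq_Ioo' hxy, Set.mem_Ioo, mul_neg_iff]
  rcases hxy.lt_or_gt with h | h
  · rw [min_eq_left h.le, max_eq_right h.le]
    constructor
    · rintro ⟨h1, h2⟩; exact Or.inr ⟨by linarith, by linarith⟩
    · rintro (⟨h1, h2⟩ | ⟨h1, h2⟩) <;> constructor <;> linarith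
  · rw [min_eq_right h.le, max_eq_left h.le]
    constructor
    · rintro ⟨h1, h2⟩; exact Or.inl ⟨by linarith, by linarith⟩
    · rintro (⟨h1, h2⟩ | ⟨h1, h2⟩) <;> constructor <;> linarith

lemma mul_mul_neg_iff_of_mul_neg {x x' y y' c : F} (hx : x * x' < 0) (hy : y * y' < 0) :
    x * y * c < 0 ↔ x' * y' * c < 0 := by
  rcases eq_or_ne c 0 with rfl | hc
  · simp
  refine neg_iff_neg_of_mul_pos ?_
  rw [show x * y * c * (x' * y' * c) = x * x' * (y * y') * c ^ 2 by ring]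
  exact mul_pos (mul_pos_of_neg_of_neg hx hy) (pow_two_pos_of_ne_zero hc)

variable {a a4 ai ak e g p q q' u v w x y : Fin 2 → F} {b4 b4' bi bk c c' : F}

lemma dotProduct_sub_dotProduct_of_dotProduct_eq (ha : a ≠ 0) (h : a ⬝ᵥ x = a ⬝ᵥ y)
    (e : Fin 2 → F) :
    e ⬝ᵥ x - e ⬝ᵥ y = (e ⬝ᵥ perp a) / (a ⬝ᵥ a) * (perp a ⬝ᵥ x - perp a ⬝ᵥ y) := by
  rw [div_mul_eq_mul_div, eq_div_iff (dotProduct_self_eq_zero.not.2 ha)]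
  simp only [dotProduct, perp, Fin.sum_univ_two, Matrix.cons_val_zero, Matrix.cons_val_one] at h ⊢
  linear_combination (e 0 * a 0 + e 1 * a 1) * h

lemma eq_of_dotProduct_eq (ha : a ≠ 0) (he : e ⬝ᵥ perp a ≠ 0) (h : a ⬝ᵥ x = a ⬝ᵥ y)
    (h' : e ⬝ᵥ x = e ⬝ᵥ y) : x = y := by
  have hN : a ⬝ᵥ a ≠ 0 := dotProduct_self_eq_zero.not.2 ha
  have hcoord : perp a ⬝ᵥ x - perp a ⬝ᵥ y = 0 := by
    have := dotProduct_sub_dotProduct_of_dotProduct_eq ha h e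
    rw [h', sub_self, eq_comm, mul_eq_zero] at this
    exact this.resolve_left (div_ne_zero he hN)
  refine dotProduct_eq x y fun e' => ?_
  rw [dotProduct_comm x, dotProduct_comm y, ← sub_eq_zero,
    dotProduct_sub_dotProduct_of_dotProduct_eq ha h, hcoord, mul_zero]

lemma dotProduct_perp_ne_zero (ha : a ≠ 0) (h : a ⬝ᵥ x = a ⬝ᵥ y) (he : e ⬝ᵥ x ≠ e ⬝ᵥ y) :
    e ⬝ᵥ perp a ≠ 0 := by
  intro h0
  apply he
  rw [← sub_eq_zero, dotProduct_sub_dotProduct_of_dotProduct_eq ha h, h0, zero_div, zero_mul]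

lemma sub_mul_sub_eq_of_dotProduct_eq (ha : a ≠ 0) (hu : a ⬝ᵥ u = a ⬝ᵥ w) (hv : a ⬝ᵥ v = a ⬝ᵥ w)
    (e : Fin 2 → F) :
    (e ⬝ᵥ u - e ⬝ᵥ w) * (e ⬝ᵥ v - e ⬝ᵥ w) =
      ((e ⬝ᵥ perp a) / (a ⬝ᵥ a)) ^ 2 *
        ((perp a ⬝ᵥ u - perp a ⬝ᵥ w) * (perp a ⬝ᵥ v - perp a ⬝ᵥ w)) := by
  rw [dotProduct_sub_dotProduct_of_dotProduct_eq ha hu,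
    dotProduct_sub_dotProduct_of_dotProduct_eq ha hv]
  ring

/-- Whether `w` lies strictly between `u` and `v` on a line can be tested with any functional
transversal to the line. -/
lemma sub_mul_sub_neg_of_sub_mul_sub_neg (ha : a ≠ 0) (he : e ⬝ᵥ perp a ≠ 0)
    (hu : a ⬝ᵥ u = a ⬝ᵥ w) (hv : a ⬝ᵥ v = a ⬝ᵥ w)
    (hg : (g ⬝ᵥ u - g ⬝ᵥ w) * (g ⬝ᵥ v - g ⬝ᵥ w) < 0) :
    (e ⬝ᵥ u - e ⬝ᵥ w) * (e ⬝ᵥ v - e ⬝ᵥ w) < 0 := by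
  rw [sub_mul_sub_eq_of_dotProduct_eq ha hu hv] at hg ⊢
  exact mul_neg_of_pos_of_neg
    (pow_two_pos_of_ne_zero (div_ne_zero he (dotProduct_self_eq_zero.not.2 ha)))
    (neg_of_mul_neg_right hg (sq_nonneg _))

lemma mem_openSegment_iff_perp (ha : a ≠ 0) (hu : a ⬝ᵥ u = a ⬝ᵥ w) (hv : a ⬝ᵥ v = a ⬝ᵥ w)
    (huv : u ≠ v) :
    w ∈ openSegment F u v ↔ (perp a ⬝ᵥ u - perp a ⬝ᵥ w) * (perp a ⬝ᵥ v - perp a ⬝ᵥ w) < 0 := by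
  have hinj : Set.InjOn (perp a ⬝ᵥ ·) {x | a ⬝ᵥ x = a ⬝ᵥ w} := fun x hx y hy hxy =>
    eq_of_dotProduct_eq ha (by rwa [perp_dotProduct_perp, ne_eq, dotProduct_self_eq_zero])
      (hx.trans hy.symm) hxy
  have hconv : Convex F {x | a ⬝ᵥ x = a ⬝ᵥ w} :=
    convex_hyperplane (dotProductBilin F F a).isLinear _
  rw [← mem_openSegment_iff_of_injOn (dotProductBilin F F (perp a)).toAffineMap hconv hinj hu hv
    rfl]
  simp only [LinearMap.coe_toAffineMap, dotProductBilin_apply_apply]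
  exact mem_openSegment_iff_sub_mul_sub_neg (hinj.ne hu hv huv)

lemma mem_openSegment_iff_mul_mul_neg (ha : a ≠ 0) {ai aj qi qj qk : Fin 2 → F} {bi bj c : F}
    (hi : ai ⬝ᵥ perp a ≠ 0) (hj : aj ⬝ᵥ perp a ≠ 0) (hqi : ai ⬝ᵥ qi = bi) (hqj : aj ⬝ᵥ qj = bj)
    (hqi' : a ⬝ᵥ qi = c) (hqj' : a ⬝ᵥ qj = c) (hqk : a ⬝ᵥ qk = c) (hij : qi ≠ qj) :
    qk ∈ openSegment F qi qj ↔
      (ai ⬝ᵥ qk - bi) * (aj ⬝ᵥ qk - bj) * ((ai ⬝ᵥ perp a) * (aj ⬝ᵥ perp a)) < 0 := by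
  have hN : a ⬝ᵥ a ≠ 0 := dotProduct_self_eq_zero.not.2 ha
  rw [mem_openSegment_iff_perp ha (hqi'.trans hqk.symm) (hqj'.trans hqk.symm) hij, ← hqi, ← hqj,
    dotProduct_sub_dotProduct_of_dotProduct_eq ha (hqk.trans hqi'.symm),
    dotProduct_sub_dotProduct_of_dotProduct_eq ha (hqk.trans hqj'.symm)]
  rw [show ∀ Di Dj N Ti Tj Tk : F, Di / N * (Tk - Ti) * (Dj / N * (Tk - Tj)) * (Di * Dj) =
      (Di * Dj / N) ^ 2 * ((Ti - Tk) * (Tj - Tk)) from fun _ _ _ _ _ _ => by ring]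
  exact (smul_neg_iff_of_pos_left
    (pow_two_pos_of_ne_zero (div_ne_zero (mul_ne_zero hi hj) hN))).symm

lemma IsArrangement.dotProduct_perp_ne_zero {n : ℕ} {a : Fin n → Fin 2 → F} {b : Fin n → F}
    (hA : IsArrangement a b) {i j : Fin n} (hij : i ≠ j) : a i ⬝ᵥ perp (a j) ≠ 0 := by
  intro h0
  have hcard : ({i, j} : Finset (Fin n)).card = 2 := Finset.card_pair hij
  obtain ⟨A, hAeq, ⟨p, hp⟩, hrank⟩ := hA.2.1 {i, j} (Finset.insert_nonempty _ _) hcard.le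
  have hshift : p + perp (a j) ∈ A := by
    rw [hAeq] at hp
    rw [← SetLike.mem_coe, hAeq]
    simp only [Set.mem_iInter, Finset.mem_insert, Finset.mem_singleton, mem_hypSet] at hp ⊢
    intro l hl
    have hl0 : a l ⬝ᵥ perp (a j) = 0 := by
      rcases hl with rfl | rfl
      exacts [h0, dotProduct_perp_self _]
    rw [dotProduct_add, hl0, add_zero]
    exact hp l hl
  have hdir : A.direction = ⊥ := Submodule.finrank_eq_zero.1 (by rw [hrank, hcard])
  have hperp := AffineSubspace.vsub_mem_direction hshift hp
  rw [hdir, Submodule.mem_bot, vsub_eq_sub, add_sub_cancel_left] at hperp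
  apply hA.1 j
  rw [← dotProduct_self_eq_zero, ← perp_dotProduct_perp, hperp, zero_dotProduct]

lemma sub_mul_sub_neg_of_inter_between (hak : ak ≠ 0) (hik : ai ⬝ᵥ perp ak ≠ 0)
    (hpi : ai ⬝ᵥ p = bi) (hpk : ak ⬝ᵥ p = bk) (hp : (g ⬝ᵥ p - c) * (g ⬝ᵥ p - c') < 0)
    (hq : ak ⬝ᵥ q = bk) (hgq : g ⬝ᵥ q = c) (hq' : ak ⬝ᵥ q' = bk) (hgq' : g ⬝ᵥ q' = c') :
    (ai ⬝ᵥ q - bi) * (ai ⬝ᵥ q' - bi) < 0 := by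
  rw [← hpi]
  refine sub_mul_sub_neg_of_sub_mul_sub_neg (g := g) hak hik (hq.trans hpk.symm)
    (hq'.trans hpk.symm) ?_
  rw [hgq, hgq']
  convert hp using 1
  ring

lemma mem_openSegment_iff_of_inter_between {n : ℕ} {a : Fin n → Fin 2 → F} {b : Fin n → F}
    (hA : IsArrangement a b) (ha4 : a4 ≠ 0) (hbb : b4 ≠ b4')
    (hpair : ∀ i j, i ≠ j → ∃ p, a i ⬝ᵥ p = b i ∧ a j ⬝ᵥ p = b j ∧
      (a4 ⬝ᵥ p - b4) * (a4 ⬝ᵥ p - b4') < 0)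
    {q q' : Fin n → Fin 2 → F} (hq : ∀ l, a l ⬝ᵥ q l = b l ∧ a4 ⬝ᵥ q l = b4)
    (hq' : ∀ l, a l ⬝ᵥ q' l = b l ∧ a4 ⬝ᵥ q' l = b4') {i j k : Fin n}
    (hij : i ≠ j) (hik : i ≠ k) (hjk : j ≠ k) :
    q k ∈ openSegment F (q i) (q j) ↔ q' k ∈ openSegment F (q' i) (q' j) := by
  have htrans : ∀ l, a l ⬝ᵥ perp a4 ≠ 0 := fun l => by
    rw [dotProduct_perp_comm, neg_ne_zero]
    exact dotProduct_perp_ne_zero (hA.1 l) ((hq l).1.trans (hq' l).1.symm)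
      (by rw [(hq l).2, (hq' l).2]; exact hbb)
  have hflip : ∀ m, m ≠ k → (a m ⬝ᵥ q k - b m) * (a m ⬝ᵥ q' k - b m) < 0 := fun m hmk => by
    obtain ⟨p, hpm, hpk, hp⟩ := hpair m k hmk
    exact sub_mul_sub_neg_of_inter_between (hA.1 k) (hA.dotProduct_perp_ne_zero hmk) hpm hpk
      hp (hq k).1 (hq k).2 (hq' k).1 (hq' k).2
  obtain ⟨p, hpi, hpj, hp⟩ := hpair i j hij
  have hoff : a4 ⬝ᵥ p ≠ b4 ∧ a4 ⬝ᵥ p ≠ b4' := by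
    constructor <;> rintro h <;> simp [h] at hp
  have hne : ∀ r : Fin n → Fin 2 → F, (∀ l, a l ⬝ᵥ r l = b l) → a4 ⬝ᵥ r i ≠ a4 ⬝ᵥ p →
      r i ≠ r j := fun r hr hrp hrij => hrp <| congrArg _ <|
    eq_of_dotProduct_eq (hA.1 j) (hA.dotProduct_perp_ne_zero hij)
      (by rw [hrij, hr, hpj]) ((hr i).trans hpi.symm)
  rw [mem_openSegment_iff_mul_mul_neg ha4 (htrans i) (htrans j) (hq i).1 (hq j).1 (hq i).2
      (hq j).2 (hq k).2 (hne q (fun l => (hq l).1) ((hq i).2.trans_ne hoff.1.symm)),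
    mem_openSegment_iff_mul_mul_neg ha4 (htrans i) (htrans j) (hq' i).1 (hq' j).1 (hq' i).2
      (hq' j).2 (hq' k).2 (hne q' (fun l => (hq' l).1) ((hq' i).2.trans_ne hoff.2.symm))]
  exact mul_mul_neg_iff_of_mul_neg (hflip i hik) (hflip j hjk)

end Field

/-- Let `L₀, L₁, L₂` be three lines in general position in `F²` and let `L₃ : a4 ⬝ x = b4`
and `L₃' : a4 ⬝ x = b4'` be two parallel lines such that the three pairwise intersection
points of `L₀, L₁, L₂` lie strictly between `L₃` and `L₃'`.  Then for each `k`, the point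
`L_k ∩ L₃` lies strictly between the other two of the points `L₀ ∩ L₃, L₁ ∩ L₃, L₂ ∩ L₃`
if and only if `L_k ∩ L₃'` lies strictly between the other two of the points
`L₀ ∩ L₃', L₁ ∩ L₃', L₂ ∩ L₃'`. -/
theorem central_point_on_either_infinity {F : Type*} [Field F] [LinearOrder F] [IsStrictOrderedRing F]
    (a : Fin 3 → Fin 2 → F) (b : Fin 3 → F) (hA : IsArrangement a b)
    (a4 : Fin 2 → F) (ha4 : a4 ≠ 0) (b4 b4' : F) (hbb : b4 ≠ b4')
    (p01 p02 p12 : Fin 2 → F)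
    (hp01 : p01 ∈ hypSet (a 0) (b 0) ∧ p01 ∈ hypSet (a 1) (b 1))
    (hp02 : p02 ∈ hypSet (a 0) (b 0) ∧ p02 ∈ hypSet (a 2) (b 2))
    (hp12 : p12 ∈ hypSet (a 1) (b 1) ∧ p12 ∈ hypSet (a 2) (b 2))
    (hbetween : ∀ p ∈ ({p01, p02, p12} : Set (Fin 2 → F)),
      (∑ j, a4 j * p j - b4) * (∑ j, a4 j * p j - b4') < 0)
    (q q' : Fin 3 → Fin 2 → F)
    (hq : ∀ k, q k ∈ hypSet (a k) (b k) ∧ q k ∈ hypSet a4 b4)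
    (hq' : ∀ k, q' k ∈ hypSet (a k) (b k) ∧ q' k ∈ hypSet a4 b4') :
    ∀ k i j : Fin 3, i ≠ j → i ≠ k → j ≠ k →
      (q k ∈ openSegment F (q i) (q j) ↔ q' k ∈ openSegment F (q' i) (q' j)) := by
  simp only [mem_hypSet] at hp01 hp02 hp12 hq hq'
  have h01 := hbetween p01 (by simp)
  have h02 := hbetween p02 (by simp)
  have h12 := hbetween p12 (by simp)
  intro k i j hij hik hjk
  refine mem_openSegment_iff_of_inter_between hA ha4 hbb (fun i j hij => ?_) hq hq' hij hik hjk
  fin_cases i <;> fin_cases j <;>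
    first
      | exact absurd rfl hij
      | exact ⟨p01, hp01.1, hp01.2, h01⟩ | exact ⟨p01, hp01.2, hp01.1, h01⟩
      | exact ⟨p02, hp02.1, hp02.2, h02⟩ | exact ⟨p02, hp02.2, hp02.1, h02⟩
      | exact ⟨p12, hp12.1, hp12.2, h12⟩ | exact ⟨p12, hp12.2, hp12.1, h12⟩
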